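/- Copy-invariance in the exchange model: let M = (W,R,V) be a binary Kripke model and define the ternary model J^M with W' = {u₁,u₂ : u ∈ W}, R' = {⟨v₁,u₁,u₂⟩, ⟨v₁,u₂,u₁⟩, ⟨v₂,u₁,u₂⟩, ⟨v₂,u₂,u₁⟩ : vRu}, V'(p) = {u₁,u₂ : u ∈ V(p)} and V'(m) = W'. Then for every formula A in the language with ·, →, ∧, ∨, ¬, ⊥, ⊤ and every u ∈ W: J^M, u₁ ⊨ A if and only if J^M, u₂ ⊨ A. -/

import Mathlib

/-- Formulas of the commutative language: `·`, `→`, `∧`, `∨`, `¬`, `⊥`, `⊤`. -/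
inductive FmE : Type
  | atom : ℕ → FmE
  | bot  : FmE
  | top  : FmE
  | conj : FmE → FmE → FmE
  | disj : FmE → FmE → FmE
  | prod : FmE → FmE → FmE
  | arrow : FmE → FmE → FmE
  | neg  : FmE → FmE
  deriving DecidableEq

/-- A binary Kripke model. -/
structure KMod where
  W : Type
  ne : Nonempty W
  R : W → W → Prop
  V : ℕ → W → Prop

/-- The ternary frame relation of the exchange model `J^M`:
`R' = {⟨v₁,u₁,u₂⟩, ⟨v₁,u₂,u₁⟩, ⟨v₂,u₁,u₂⟩, ⟨v₂,u₂,u₁⟩ : vRu}`,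
where `w₁ = (w, false)` and `w₂ = (w, true)`. -/
def RE (M : KMod) (a b c : M.W × Bool) : Prop :=
  ∃ v u, M.R v u ∧ (a.1 = v) ∧
    ((b = (u, false) ∧ c = (u, true)) ∨ (b = (u, true) ∧ c = (u, false)))

/-- The valuation of `J^M`: `V'(p) = {u₁, u₂ : u ∈ V(p)}` and `V'(m) = W'`,
the distinguished letter `m` being `atom 0` (letter `p` is `atom (p+1)`). -/
def VE (M : KMod) (n : ℕ) (x : M.W × Bool) : Prop :=
  match n with
  | 0 => True
  | n + 1 => M.V n x.1

/-- Ternary satisfaction in `J^M` for the commutative language. -/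
def satE (M : KMod) : FmE → M.W × Bool → Prop
  | .atom n, u => VE M n u
  | .bot, _ => False
  | .top, _ => True
  | .conj A B, u => satE M A u ∧ satE M B u
  | .disj A B, u => satE M A u ∨ satE M B u
  | .neg A, u => ¬ satE M A u
  | .prod A B, u => ∃ v w, RE M u v w ∧ satE M A v ∧ satE M B w
  | .arrow A B, u => ∀ v w, RE M v w u → satE M A w → satE M B v

/-!
`R'(a, b, c)` holds exactly when `a.1 R b.1` and `c` is the other copy of `b`; it ignores which
copy `a` is. So the truth of a product at `uᵢ` does not depend on `i`, while an implication at `uᵢ`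
tests its antecedent only at the other copy of `u`, where by induction it holds iff it holds at `uᵢ`.
-/

section ExchangeModel

variable {M : KMod}

theorem RE_iff {a b c : M.W × Bool} : RE M a b c ↔ M.R a.1 b.1 ∧ c = (b.1, !b.2) := by
  obtain ⟨u, _ | _⟩ := b <;> simp [RE, eq_comm]

theorem satE_prod_iff {A B : FmE} {x : M.W × Bool} :
    satE M (.prod A B) x ↔ ∃ v, M.R x.1 v.1 ∧ satE M A v ∧ satE M B (v.1, !v.2) := by
  simp only [satE, RE_iff]
  constructor
  · rintro ⟨v, w, ⟨hR, rfl⟩, hA, hB⟩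
    exact ⟨v, hR, hA, hB⟩
  · rintro ⟨v, hR, hA, hB⟩
    exact ⟨v, _, ⟨hR, rfl⟩, hA, hB⟩

theorem satE_arrow_iff {A B : FmE} {x : M.W × Bool} :
    satE M (.arrow A B) x ↔ ∀ v : M.W × Bool, M.R v.1 x.1 → satE M A (x.1, !x.2) → satE M B v := by
  simp only [satE, RE_iff]
  constructor
  · intro h v hR hA
    exact h v (x.1, !x.2) ⟨hR, by simp⟩ hA
  · rintro h v w ⟨hR, rfl⟩ hA
    exact h v hR (by simpa using hA)

theorem satE_copy_iff (A : FmE) (u : M.W) (b b' : Bool) :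
    satE M A (u, b) ↔ satE M A (u, b') := by
  induction A generalizing u b b' with
  | atom | bot | top => exact Iff.rfl
  | conj A B ihA ihB => exact and_congr (ihA u b b') (ihB u b b')
  | disj A B ihA ihB => exact or_congr (ihA u b b') (ihB u b b')
  | neg A ihA => exact not_congr (ihA u b b')
  | prod A B => simp only [satE_prod_iff]
  | arrow A B ihA =>
    simp only [satE_arrow_iff]
    rw [ihA u (!b) (!b')]

end ExchangeModel

/-- Copy-invariance in the exchange model: for every formula `A` and every
state `u` of the base Kripke model, `J^M, u₁ ⊨ A` iff `J^M, u₂ ⊨ A`. -/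
theorem stmt17 (M : KMod) (A : FmE) (u : M.W) :
    satE M A (u, false) ↔ satE M A (u, true) :=
  satE_copy_iff A u false true
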